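/- Let a ∈ ℝ, α ∈ (0,1), γ ∈ (0,1], k > γ - α - 1, M ≥ 0, and let x : (a,a+l] → ℝ be continuous and satisfy x(t) = x₀(t-a)^{γ-1} + ∫_a^t (t-s)^{α-1} g(s) ds / Γ(α), where g is measurable with |g(s)| ≤ M(s-a)^k on (a,a+l]. Then lim_{t→a⁺} (t-a)^{1-γ} x(t) = x₀. -/

import Mathlib

/-!
Split `∫ s in a..t, (t - s) ^ (α - 1) * g s` at the midpoint `m = (a + t) / 2`. On `(m, t]` the
bound `|g s| ≤ M (s - a) ^ k` is comparable to `M (t - a) ^ k`, so this half is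
`O((t - a) ^ (α + k))`. On `(a, m]` the kernel is comparable to `(t - a) ^ (α - 1)`, so this half is
`O((t - a) ^ (α - 1) * ∫ s in a..m, |g s|)`, where `∫ s in a..m, |g s|` is `O((t - a) ^ (k + 1))`
if `k > -1` and bounded otherwise (and then `γ < α`). Since `α + k + 1 - γ > 0`, the weight
`(t - a) ^ (1 - γ)` sends both halves to `0`.
-/

open Set Filter Topology MeasureTheory intervalIntegral

lemma rpow_le_two_rpow_abs_mul_rpow {u d : ℝ} (k : ℝ) (hd : 0 < d) (hdu : d / 2 ≤ u)
    (hud : u ≤ d) : u ^ k ≤ 2 ^ |k| * d ^ k := by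
  rcases le_total 0 k with hk | hk
  · calc u ^ k ≤ d ^ k := Real.rpow_le_rpow (by linarith) hud hk
      _ ≤ 2 ^ |k| * d ^ k :=
        le_mul_of_one_le_left (by positivity) (Real.one_le_rpow (by norm_num) (abs_nonneg k))
  · calc u ^ k ≤ (d / 2) ^ k := Real.rpow_le_rpow_of_nonpos (by positivity) hdu hk
      _ = 2 ^ |k| * d ^ k := by
        rw [Real.div_rpow hd.le zero_le_two, abs_of_nonpos hk, Real.rpow_neg zero_le_two]
        ring

lemma tendsto_sub_rpow_nhdsGT (a : ℝ) {q : ℝ} (hq : 0 < q) :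
    Tendsto (fun t => (t - a) ^ q) (𝓝[>] a) (𝓝 0) := by
  have h : Tendsto (fun t : ℝ => t - a) (𝓝[>] a) (𝓝 0) :=
    tendsto_nhdsWithin_of_tendsto_nhds (by simpa using (continuous_sub_right a).tendsto a)
  simpa [Function.comp_def, Real.zero_rpow hq.ne'] using
    (Real.continuousAt_rpow_const 0 q (Or.inr hq.le)).tendsto.comp h

lemma integral_const_sub_rpow_sub_one {α : ℝ} (hα : 0 < α) (m t : ℝ) :
    ∫ s in m..t, (t - s) ^ (α - 1) = (t - m) ^ α / α := by
  rw [intervalIntegral.integral_comp_sub_left (fun u => u ^ (α - 1)),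
    integral_rpow (Or.inl (by linarith)), sub_self, sub_add_cancel, Real.zero_rpow hα.ne',
    sub_zero]

lemma intervalIntegrable_const_sub_rpow_sub_one {α : ℝ} (hα : 0 < α) (m t : ℝ) :
    IntervalIntegrable (fun s => (t - s) ^ (α - 1)) volume m t := by
  simpa using
    (intervalIntegrable_rpow' (r := α - 1) (a := t - m) (b := t - t) (by linarith)).comp_sub_left t

lemma integral_sub_const_rpow {k : ℝ} (hk : -1 < k) (a b : ℝ) :
    ∫ s in a..b, (s - a) ^ k = (b - a) ^ (k + 1) / (k + 1) := by
  rw [intervalIntegral.integral_comp_sub_right (fun u => u ^ k), integral_rpow (Or.inl hk),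
    sub_self, Real.zero_rpow (by linarith), sub_zero]

lemma exists_eventually_integral_le_nhdsGT {f : ℝ → ℝ} (hf : 0 ≤ f) (a : ℝ) :
    ∃ C, ∀ᶠ u in 𝓝[>] a, ∫ s in a..u, f s ≤ C := by
  by_cases h : ∃ b > a, IntervalIntegrable f volume a b
  · obtain ⟨b, hab, hfi⟩ := h
    refine ⟨∫ s in a..b, f s, ?_⟩
    filter_upwards [Ioc_mem_nhdsGT hab] with u hu
    exact integral_mono_interval le_rfl hu.1.le hu.2 (Eventually.of_forall hf) hfi
  · -- then every `∫ s in a..u, f s` with `u > a` is `0` by convention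
    push Not at h
    refine ⟨0, ?_⟩
    filter_upwards [self_mem_nhdsWithin] with u hu
    rw [integral_undef (h u hu)]

lemma tendsto_midpoint_nhdsGT (a : ℝ) : Tendsto (fun t => (a + t) / 2) (𝓝[>] a) (𝓝[>] a) := by
  refine tendsto_nhdsWithin_iff.2 ⟨tendsto_nhdsWithin_of_tendsto_nhds ?_, ?_⟩
  · simpa using ((continuous_const_add a).div_const 2).tendsto a
  · filter_upwards [self_mem_nhdsWithin] with t (ht : a < t)
    show a < (a + t) / 2
    linarith

lemma integral_abs_le_of_abs_le_rpow {g : ℝ → ℝ} {a b k M : ℝ} (hk : -1 < k) (hab : a ≤ b)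
    (hgb : ∀ s ∈ Ioc a b, |g s| ≤ M * (s - a) ^ k) :
    ∫ s in a..b, |g s| ≤ M * ((b - a) ^ (k + 1) / (k + 1)) := by
  rw [← integral_sub_const_rpow hk, ← intervalIntegral.integral_const_mul,
    integral_of_le hab, integral_of_le hab]
  have hi : IntervalIntegrable (fun s => M * (s - a) ^ k) volume a b := by
    simpa using
      ((intervalIntegrable_rpow' (a := 0) (b := b - a) hk).comp_sub_right a).const_mul M
  refine integral_mono_of_nonneg (Eventually.of_forall fun s => abs_nonneg _) hi.1 ?_
  exact (ae_restrict_iff' measurableSet_Ioc).2 (Eventually.of_forall hgb)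

lemma tendsto_sub_rpow_mul_integral_abs_midpoint {g : ℝ → ℝ} {a l k M p : ℝ} (hl : 0 < l)
    (hM : 0 ≤ M) (hgb : ∀ s ∈ Ioc a (a + l), |g s| ≤ M * (s - a) ^ k) (hpk : 0 < p + k + 1) :
    Tendsto (fun t => (t - a) ^ p * ∫ s in a..(a + t) / 2, |g s|) (𝓝[>] a) (𝓝 0) := by
  have hnonneg : ∀ᶠ t in 𝓝[>] a, 0 ≤ (t - a) ^ p * ∫ s in a..(a + t) / 2, |g s| := by
    filter_upwards [self_mem_nhdsWithin] with t (ht : a < t)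
    exact mul_nonneg (Real.rpow_nonneg (by linarith) p)
      (integral_nonneg (by linarith) fun s _ => abs_nonneg _)
  rcases le_or_gt k (-1) with hk | hk
  · obtain ⟨C, hC⟩ := exists_eventually_integral_le_nhdsGT (f := fun s => |g s|)
      (fun s => abs_nonneg _) a
    refine squeeze_zero' hnonneg ?_
      (by simpa using (tendsto_sub_rpow_nhdsGT a (q := p) (by linarith)).mul_const C)
    filter_upwards [(tendsto_midpoint_nhdsGT a).eventually hC, self_mem_nhdsWithin]
      with t htC (ht : a < t)
    exact mul_le_mul_of_nonneg_left htC (Real.rpow_nonneg (by linarith) p)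
  · refine squeeze_zero' hnonneg ?_
      (by simpa using (tendsto_sub_rpow_nhdsGT a hpk).const_mul (M / (k + 1)))
    filter_upwards [Ioc_mem_nhdsGT (by linarith : a < a + l)] with t ht
    have hta : 0 < t - a := by linarith [ht.1]
    calc (t - a) ^ p * ∫ s in a..(a + t) / 2, |g s|
        ≤ (t - a) ^ p * (M * (((a + t) / 2 - a) ^ (k + 1) / (k + 1))) := by
          gcongr ?_ * ?_
          exact integral_abs_le_of_abs_le_rpow hk (by linarith)
            fun s hs => hgb s ⟨hs.1, by linarith [hs.2, ht.2]⟩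
      _ ≤ (t - a) ^ p * (M * ((t - a) ^ (k + 1) / (k + 1))) := by
          gcongr <;> linarith
      _ = M / (k + 1) * (t - a) ^ (p + k + 1) := by
          rw [add_assoc p, Real.rpow_add hta p]
          ring

section MidpointSplit

variable {g : ℝ → ℝ} {a t α : ℝ}

lemma integrableOn_midpoint_of_integrableOn_const_sub_rpow_mul (hg : AEStronglyMeasurable g)
    (hat : a < t) (h : IntegrableOn (fun s => (t - s) ^ (α - 1) * g s) (Ioc a t)) :
    IntegrableOn g (Ioc a ((a + t) / 2)) := by
  refine Integrable.mono' ((h.mono_set (Ioc_subset_Ioc_right (by linarith))).norm.const_mul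
    (2 ^ |1 - α| * (t - a) ^ (1 - α))) hg.restrict
    ((ae_restrict_iff' measurableSet_Ioc).2 (Eventually.of_forall fun s hs => ?_))
  have hts : 0 < t - s := by linarith [hs.2]
  calc ‖g s‖ = (t - s) ^ (1 - α) * ‖(t - s) ^ (α - 1) * g s‖ := by
        rw [norm_mul, Real.norm_of_nonneg (Real.rpow_nonneg hts.le _), ← mul_assoc,
          ← Real.rpow_add hts]
        simp
    _ ≤ 2 ^ |1 - α| * (t - a) ^ (1 - α) * ‖(t - s) ^ (α - 1) * g s‖ := by
        gcongr
        exact rpow_le_two_rpow_abs_mul_rpow _ (by linarith) (by linarith [hs.2])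
          (by linarith [hs.1])

lemma norm_integral_lower_half_le (hat : a < t)
    (hg : IntervalIntegrable (fun s => |g s|) volume a ((a + t) / 2)) :
    ‖∫ s in a..(a + t) / 2, (t - s) ^ (α - 1) * g s‖ ≤
      2 ^ |α - 1| * (t - a) ^ (α - 1) * ∫ s in a..(a + t) / 2, |g s| := by
  rw [← intervalIntegral.integral_const_mul]
  refine norm_integral_le_of_norm_le (by linarith) (Eventually.of_forall fun s hs => ?_)
    (hg.const_mul _)
  rw [norm_mul, Real.norm_of_nonneg (Real.rpow_nonneg (by linarith [hs.2]) _), Real.norm_eq_abs]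
  gcongr
  exact rpow_le_two_rpow_abs_mul_rpow _ (by linarith) (by linarith [hs.2]) (by linarith [hs.1])

lemma norm_integral_upper_half_le {k M : ℝ} (hα : 0 < α) (hM : 0 ≤ M) (hat : a < t)
    (hgb : ∀ s ∈ Ioc ((a + t) / 2) t, |g s| ≤ M * (s - a) ^ k) :
    ‖∫ s in (a + t) / 2..t, (t - s) ^ (α - 1) * g s‖ ≤ 2 ^ |k| * M / α * (t - a) ^ (α + k) := by
  have hta : 0 < t - a := by linarith
  have hbound : ∀ s ∈ Ioc ((a + t) / 2) t,
      ‖(t - s) ^ (α - 1) * g s‖ ≤ 2 ^ |k| * M * (t - a) ^ k * (t - s) ^ (α - 1) := by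
    intro s hs
    have hts : 0 ≤ (t - s) ^ (α - 1) := Real.rpow_nonneg (by linarith [hs.2]) _
    rw [norm_mul, Real.norm_of_nonneg hts, Real.norm_eq_abs, mul_comm]
    refine mul_le_mul_of_nonneg_right ?_ hts
    calc |g s| ≤ M * (s - a) ^ k := hgb s hs
      _ ≤ M * (2 ^ |k| * (t - a) ^ k) := by
        gcongr
        exact rpow_le_two_rpow_abs_mul_rpow _ hta (by linarith [hs.1]) (by linarith [hs.2])
      _ = 2 ^ |k| * M * (t - a) ^ k := by ring
  calc _ ≤ ∫ s in (a + t) / 2..t, 2 ^ |k| * M * (t - a) ^ k * (t - s) ^ (α - 1) :=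
        norm_integral_le_of_norm_le (by linarith) (Eventually.of_forall hbound)
          ((intervalIntegrable_const_sub_rpow_sub_one hα _ t).const_mul _)
    _ = 2 ^ |k| * M * (t - a) ^ k * ((t - (a + t) / 2) ^ α / α) := by
        rw [intervalIntegral.integral_const_mul, integral_const_sub_rpow_sub_one hα]
    _ ≤ 2 ^ |k| * M * (t - a) ^ k * ((t - a) ^ α / α) := by
        gcongr <;> linarith
    _ = 2 ^ |k| * M / α * (t - a) ^ (α + k) := by
        rw [Real.rpow_add hta]
        ring

lemma abs_integral_const_sub_rpow_mul_le {k M : ℝ} (hg : Measurable g) (hα : 0 < α)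
    (hM : 0 ≤ M) (hat : a < t) (hgb : ∀ s ∈ Ioc a t, |g s| ≤ M * (s - a) ^ k) :
    |∫ s in a..t, (t - s) ^ (α - 1) * g s| ≤
      2 ^ |α - 1| * (t - a) ^ (α - 1) * (∫ s in a..(a + t) / 2, |g s|) +
        2 ^ |k| * M / α * (t - a) ^ (α + k) := by
  have ham : a ≤ (a + t) / 2 := by linarith
  have hmt : (a + t) / 2 ≤ t := by linarith
  by_cases hF : IntervalIntegrable (fun s => (t - s) ^ (α - 1) * g s) volume a t
  swap
  · -- the interval integral of a non-integrable function is `0`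
    rw [integral_undef hF, abs_zero]
    have : 0 ≤ ∫ s in a..(a + t) / 2, |g s| := integral_nonneg ham fun s _ => abs_nonneg (g s)
    positivity
  have hg₁ : IntervalIntegrable (fun s => |g s|) volume a ((a + t) / 2) :=
    ((intervalIntegrable_iff_integrableOn_Ioc_of_le ham).2
      (integrableOn_midpoint_of_integrableOn_const_sub_rpow_mul hg.aestronglyMeasurable hat
        ((intervalIntegrable_iff_integrableOn_Ioc_of_le hat.le).1 hF))).abs
  have hmid : (a + t) / 2 ∈ uIcc a t := by rw [uIcc_of_le hat.le]; exact ⟨ham, hmt⟩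
  rw [← integral_add_adjacent_intervals (hF.mono_set (uIcc_subset_uIcc_left hmid))
    (hF.mono_set (uIcc_subset_uIcc_right hmid))]
  exact (abs_add_le _ _).trans (add_le_add (norm_integral_lower_half_le hat hg₁)
    (norm_integral_upper_half_le hα hM hat fun s hs => hgb s ⟨by linarith [hs.1], hs.2⟩))

end MidpointSplit

lemma tendsto_sub_rpow_mul_integral_const_sub_rpow_mul {g : ℝ → ℝ} {a l α k M p : ℝ}
    (hg : Measurable g) (hl : 0 < l) (hα : 0 < α) (hM : 0 ≤ M)
    (hgb : ∀ s ∈ Ioc a (a + l), |g s| ≤ M * (s - a) ^ k) (hp : 0 < p + α + k) :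
    Tendsto (fun t => (t - a) ^ p * ∫ s in a..t, (t - s) ^ (α - 1) * g s) (𝓝[>] a) (𝓝 0) := by
  have hnear :=
    tendsto_sub_rpow_mul_integral_abs_midpoint (p := p + (α - 1)) hl hM hgb (by linarith)
  have hfar := tendsto_sub_rpow_nhdsGT a (q := p + (α + k)) (by linarith)
  refine squeeze_zero_norm' ?_
    (by simpa using (hnear.const_mul (2 ^ |α - 1|)).add (hfar.const_mul (2 ^ |k| * M / α)))
  filter_upwards [Ioc_mem_nhdsGT (by linarith : a < a + l)] with t ht
  have hta : 0 < t - a := by linarith [ht.1]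
  calc ‖(t - a) ^ p * ∫ s in a..t, (t - s) ^ (α - 1) * g s‖
      = (t - a) ^ p * |∫ s in a..t, (t - s) ^ (α - 1) * g s| := by
        rw [norm_mul, Real.norm_of_nonneg (Real.rpow_nonneg hta.le p), Real.norm_eq_abs]
    _ ≤ (t - a) ^ p * (2 ^ |α - 1| * (t - a) ^ (α - 1) * (∫ s in a..(a + t) / 2, |g s|) +
          2 ^ |k| * M / α * (t - a) ^ (α + k)) := by
        gcongr
        exact abs_integral_const_sub_rpow_mul_le hg hα hM ht.1
          fun s hs => hgb s ⟨hs.1, hs.2.trans ht.2⟩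
    _ = 2 ^ |α - 1| * ((t - a) ^ (p + (α - 1)) * ∫ s in a..(a + t) / 2, |g s|) +
          2 ^ |k| * M / α * (t - a) ^ (p + (α + k)) := by
        rw [Real.rpow_add hta p, Real.rpow_add hta p]
        ring

theorem weighted_initial_condition_general (a l α γ k M x₀ : ℝ) (hl : 0 < l)
    (hα : α ∈ Set.Ioo (0:ℝ) 1)
    (hk : γ - α - 1 < k) (hM : 0 ≤ M)
    (g : ℝ → ℝ) (hg : Measurable g)
    (hgbound : ∀ s ∈ Set.Ioc a (a + l), |g s| ≤ M * (s - a) ^ k)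
    (x : ℝ → ℝ)
    (hxeq : ∀ t ∈ Set.Ioc a (a + l),
      x t = x₀ * (t - a) ^ (γ - 1) +
        (∫ s in a..t, (t - s) ^ (α - 1) * g s) / Real.Gamma α) :
    Filter.Tendsto (fun t => (t - a) ^ (1 - γ) * x t)
      (nhdsWithin a (Set.Ioi a)) (nhds x₀) := by
  have hI := tendsto_sub_rpow_mul_integral_const_sub_rpow_mul (p := 1 - γ) hg hl hα.1 hM hgbound
    (by linarith)
  have hlim : Tendsto (fun t => x₀ + (t - a) ^ (1 - γ) * (∫ s in a..t, (t - s) ^ (α - 1) * g s) /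
      Real.Gamma α) (𝓝[>] a) (𝓝 x₀) := by
    simpa using (hI.div_const (Real.Gamma α)).const_add x₀
  refine hlim.congr' ?_
  filter_upwards [Ioc_mem_nhdsGT (by linarith : a < a + l)] with t ht
  have hcancel : (t - a) ^ (1 - γ) * (t - a) ^ (γ - 1) = 1 := by
    rw [← Real.rpow_add (by linarith [ht.1])]
    simp
  rw [hxeq t ht]
  linear_combination (-x₀) * hcancel

theorem weighted_initial_condition (a l α γ k M x₀ : ℝ) (hl : 0 < l)
    (hα : α ∈ Set.Ioo (0:ℝ) 1) (hγ : γ ∈ Set.Ioc (0:ℝ) 1)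
    (hk : γ - α - 1 < k) (hM : 0 ≤ M)
    (g : ℝ → ℝ) (hg : Measurable g)
    (hgbound : ∀ s ∈ Set.Ioc a (a + l), |g s| ≤ M * (s - a) ^ k)
    (x : ℝ → ℝ) (hxc : ContinuousOn x (Set.Ioc a (a + l)))
    (hxeq : ∀ t ∈ Set.Ioc a (a + l),
      x t = x₀ * (t - a) ^ (γ - 1) +
        (∫ s in a..t, (t - s) ^ (α - 1) * g s) / Real.Gamma α) :
    Filter.Tendsto (fun t => (t - a) ^ (1 - γ) * x t)
      (nhdsWithin a (Set.Ioi a)) (nhds x₀) :=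
  weighted_initial_condition_general a l α γ k M x₀ hl hα hk hM g hg hgbound x hxeq
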